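/- arXiv:1805.01329 — 3 statements merged into one kernel-verified Lean document; each statement's English description precedes it below -/
import Mathlib

section
/- Let n ≥ 3 and let x₁,…,x_n be real numbers with mean x̄ = (1/n) Σᵢ xᵢ. Suppose (x_n − x̄)² ≤ (xᵢ − x̄)² for every i = 1,…,n−1 (i.e., x_n is a value closest to the mean). Then var(x₁,…,x_n) ≤ var(x₁,…,x_{n−1}), and hence sd(x₁,…,x_n) ≤ sd(x₁,…,x_{n−1}); moreover the inequality is strict unless either x₁ = ⋯ = x_n, or n is even and the multiset {x₁,…,x_n} consists of n/2 copies of each of two distinct values. -/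
/-!
Let `m` be the mean of `t = insert a s` and `N = #t`. By the König–Huygens identity, deleting `a`
lowers the sum of squared deviations by exactly `N / (N - 1) * (x a - m) ^ 2`, so `var t ≤ var s`
amounts to `(x a - m) ^ 2` being at most the average squared deviation over `t`, which holds when
`x a` is closest to the mean. Equality forces all squared deviations to equal some `d ^ 2`; as the
deviations sum to zero, either `d = 0` or the values `m + d` and `m - d` each occur `N / 2` times.
-/

open Finset

namespace Finset

variable {ι : Type*} (s : Finset ι) (x : ι → ℝ)

noncomputable def mean : ℝ := (∑ i ∈ s, x i) / #s

noncomputable def sumSqDev : ℝ := ∑ i ∈ s, (x i - s.mean x) ^ 2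

noncomputable def sampleVar : ℝ := s.sumSqDev x / (#s - 1)

theorem sum_sub_mean : ∑ i ∈ s, (x i - s.mean x) = 0 := by
  rcases s.eq_empty_or_nonempty with rfl | hs
  · simp
  · rw [sum_sub_distrib, sum_const, nsmul_eq_mul, mean,
      mul_div_cancel₀ _ (Nat.cast_ne_zero.2 hs.card_ne_zero), sub_self]

theorem sumSqDev_nonneg : 0 ≤ s.sumSqDev x := sum_nonneg fun _ _ ↦ sq_nonneg _

theorem sampleVar_nonneg (hs : s.Nonempty) : 0 ≤ s.sampleVar x := by
  have : (1 : ℝ) ≤ #s := by exact_mod_cast hs.card_pos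
  exact div_nonneg (s.sumSqDev_nonneg x) (by linarith)

theorem sum_sq_sub_eq_sumSqDev_add (c : ℝ) :
    ∑ i ∈ s, (x i - c) ^ 2 = s.sumSqDev x + #s * (s.mean x - c) ^ 2 := by
  have h (i : ι) : (x i - c) ^ 2 = (x i - s.mean x) ^ 2
      + 2 * (s.mean x - c) * (x i - s.mean x) + (s.mean x - c) ^ 2 := by ring
  simp only [h, sum_add_distrib, ← mul_sum, sum_sub_mean, sum_const, nsmul_eq_mul, sumSqDev]
  ring

variable {s} {a : ι}

theorem card_mul_sq_le_sumSqDev (h : ∀ i ∈ s, (x a - s.mean x) ^ 2 ≤ (x i - s.mean x) ^ 2) :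
    #s * (x a - s.mean x) ^ 2 ≤ s.sumSqDev x := by
  simpa [sumSqDev] using card_nsmul_le_sum s _ _ h

theorem card_mul_sq_lt_sumSqDev (h : ∀ i ∈ s, (x a - s.mean x) ^ 2 ≤ (x i - s.mean x) ^ 2)
    (hlt : ∃ i ∈ s, (x a - s.mean x) ^ 2 < (x i - s.mean x) ^ 2) :
    #s * (x a - s.mean x) ^ 2 < s.sumSqDev x := by
  simpa [sumSqDev] using sum_lt_sum h hlt

theorem eq_mean_or_two_values_of_sq_sub_mean_eq {d : ℝ}
    (h : ∀ i ∈ s, (x i - s.mean x) ^ 2 = d ^ 2) :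
    (∀ i ∈ s, x i = s.mean x) ∨ ∃ u v : ℝ, u ≠ v ∧
      2 * #{i ∈ s | x i = u} = #s ∧ 2 * #{i ∈ s | x i = v} = #s := by
  set m := s.mean x
  rcases eq_or_ne d 0 with rfl | hd
  · exact Or.inl fun i hi ↦ by simpa [sub_eq_zero] using h i hi
  have hne : m + d ≠ m - d := fun h ↦ hd (by linarith)
  have hpm (i) (hi : i ∈ s) : x i = m + d ∨ x i = m - d := by
    rcases sq_eq_sq_iff_eq_or_eq_neg.1 (h i hi) with h' | h'
    exacts [Or.inl (by linarith), Or.inr (by linarith)]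
  have hlow : {i ∈ s | ¬x i = m + d} = {i ∈ s | x i = m - d} := by
    refine filter_congr fun i hi ↦ ?_
    rcases hpm i hi with h' | h' <;> simp [h', hne, hne.symm]
  have hcard := card_filter_add_card_filter_not (s := s) (x · = m + d)
  have hsum := sum_filter_add_sum_filter_not s (x · = m + d) (x · - m)
  rw [hlow] at hcard hsum
  rw [sum_sub_mean, sum_eq_card_nsmul (s := {i ∈ s | x i = m + d}) (b := d)
      fun i hi ↦ by rw [(mem_filter.1 hi).2]; ring,
    sum_eq_card_nsmul (s := {i ∈ s | x i = m - d}) (b := -d)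
      fun i hi ↦ by rw [(mem_filter.1 hi).2]; ring, nsmul_eq_mul, nsmul_eq_mul] at hsum
  have heq : #{i ∈ s | x i = m + d} = #{i ∈ s | x i = m - d} := by
    have : ((#{i ∈ s | x i = m + d} : ℝ) - #{i ∈ s | x i = m - d}) * d = 0 := by linarith
    exact_mod_cast sub_eq_zero.1 ((mul_eq_zero.1 this).resolve_right hd)
  exact Or.inr ⟨m + d, m - d, hne, by omega, by omega⟩

variable [DecidableEq ι]

theorem card_mul_sumSqDev_insert (ha : a ∉ s) :
    #s * (insert a s).sumSqDev x
      = #s * s.sumSqDev x + (#s + 1) * (x a - (insert a s).mean x) ^ 2 := by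
  set m := (insert a s).mean x
  have hsum : ∑ i ∈ s, (x i - m) = -(x a - m) := by
    have := sum_sub_mean (insert a s) x
    rw [sum_insert ha] at this
    linarith
  have hshift : #s * (s.mean x - m) = -(x a - m) := by
    have := sum_sub_mean s x
    simp only [sum_sub_distrib, sum_const, nsmul_eq_mul] at this hsum
    linarith
  rw [sumSqDev, sum_insert ha, sum_sq_sub_eq_sumSqDev_add]
  linear_combination (#s * (s.mean x - m) - (x a - m)) * hshift

theorem sampleVar_insert_le_iff (ha : a ∉ s) (hs : 2 ≤ #s) :
    (insert a s).sampleVar x ≤ s.sampleVar x ↔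
      #(insert a s) * (x a - (insert a s).mean x) ^ 2 ≤ (insert a s).sumSqDev x := by
  have hk : (2 : ℝ) ≤ #s := by exact_mod_cast hs
  have hid := card_mul_sumSqDev_insert x ha
  rw [sampleVar, sampleVar, card_insert_of_notMem ha, Nat.cast_succ, add_sub_cancel_right,
    div_le_div_iff₀ (by linarith) (by linarith)]
  constructor <;> intro h <;> nlinarith

theorem sampleVar_insert_lt_iff (ha : a ∉ s) (hs : 2 ≤ #s) :
    (insert a s).sampleVar x < s.sampleVar x ↔
      #(insert a s) * (x a - (insert a s).mean x) ^ 2 < (insert a s).sumSqDev x := by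
  have hk : (2 : ℝ) ≤ #s := by exact_mod_cast hs
  have hid := card_mul_sumSqDev_insert x ha
  rw [sampleVar, sampleVar, card_insert_of_notMem ha, Nat.cast_succ, add_sub_cancel_right,
    div_lt_div_iff₀ (by linarith) (by linarith)]
  constructor <;> intro h <;> nlinarith

theorem sampleVar_insert_le (ha : a ∉ s) (hs : 2 ≤ #s)
    (hclose : ∀ i ∈ s, (x a - (insert a s).mean x) ^ 2 ≤ (x i - (insert a s).mean x) ^ 2) :
    (insert a s).sampleVar x ≤ s.sampleVar x :=
  (sampleVar_insert_le_iff x ha hs).2 <|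
    card_mul_sq_le_sumSqDev x (forall_mem_insert _ _ _ |>.2 ⟨le_rfl, hclose⟩)

theorem sampleVar_insert_lt (ha : a ∉ s) (hs : 2 ≤ #s)
    (hclose : ∀ i ∈ s, (x a - (insert a s).mean x) ^ 2 ≤ (x i - (insert a s).mean x) ^ 2)
    (hlt : ∃ i ∈ s, (x a - (insert a s).mean x) ^ 2 < (x i - (insert a s).mean x) ^ 2) :
    (insert a s).sampleVar x < s.sampleVar x :=
  have ⟨i, hi, hlt⟩ := hlt
  (sampleVar_insert_lt_iff x ha hs).2 <|
    card_mul_sq_lt_sumSqDev x (forall_mem_insert _ _ _ |>.2 ⟨le_rfl, hclose⟩)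
      ⟨i, mem_insert_of_mem hi, hlt⟩

theorem mean_Icc_one (k : ℕ) (x : ℕ → ℝ) : (Icc 1 k).mean x = (∑ j ∈ Icc 1 k, x j) / k := by
  simp [mean]

theorem sampleVar_Icc_one (k : ℕ) (x : ℕ → ℝ) : (Icc 1 k).sampleVar x
    = (∑ i ∈ Icc 1 k, (x i - (∑ j ∈ Icc 1 k, x j) / k) ^ 2) / ((k : ℝ) - 1) := by
  simp [sampleVar, sumSqDev, mean]

end Finset

/-- If `x_n` is an entry closest to the mean of `x₁,…,x_n` (`n ≥ 3`), then removing it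
does not decrease the sample variance (hence neither the sample standard deviation);
the inequalities are strict unless all entries are equal, or `n` is even and the
entries take exactly two distinct values, each with multiplicity `n/2`. -/
theorem var_remove_closest_to_mean (n : ℕ) (hn : 3 ≤ n) (x : ℕ → ℝ)
    (hclose : ∀ i ∈ Finset.Icc 1 (n - 1),
      (x n - (∑ j ∈ Finset.Icc 1 n, x j) / n) ^ 2 ≤
        (x i - (∑ j ∈ Finset.Icc 1 n, x j) / n) ^ 2) :
    (∑ i ∈ Finset.Icc 1 n, (x i - (∑ j ∈ Finset.Icc 1 n, x j) / n) ^ 2) / ((n : ℝ) - 1) ≤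
      (∑ i ∈ Finset.Icc 1 (n - 1),
          (x i - (∑ j ∈ Finset.Icc 1 (n - 1), x j) / ((n : ℝ) - 1)) ^ 2) / ((n : ℝ) - 2) ∧
    Real.sqrt
        ((∑ i ∈ Finset.Icc 1 n, (x i - (∑ j ∈ Finset.Icc 1 n, x j) / n) ^ 2) /
          ((n : ℝ) - 1)) ≤
      Real.sqrt
        ((∑ i ∈ Finset.Icc 1 (n - 1),
            (x i - (∑ j ∈ Finset.Icc 1 (n - 1), x j) / ((n : ℝ) - 1)) ^ 2) /
          ((n : ℝ) - 2)) ∧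
    (¬ ((∀ i ∈ Finset.Icc 1 n, x i = x 1) ∨
          (Even n ∧ ∃ a b : ℝ, a ≠ b ∧
            ((Finset.Icc 1 n).filter (fun i => x i = a)).card = n / 2 ∧
            ((Finset.Icc 1 n).filter (fun i => x i = b)).card = n / 2)) →
      (∑ i ∈ Finset.Icc 1 n, (x i - (∑ j ∈ Finset.Icc 1 n, x j) / n) ^ 2) / ((n : ℝ) - 1) <
        (∑ i ∈ Finset.Icc 1 (n - 1),
            (x i - (∑ j ∈ Finset.Icc 1 (n - 1), x j) / ((n : ℝ) - 1)) ^ 2) /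
          ((n : ℝ) - 2) ∧
      Real.sqrt
          ((∑ i ∈ Finset.Icc 1 n, (x i - (∑ j ∈ Finset.Icc 1 n, x j) / n) ^ 2) /
            ((n : ℝ) - 1)) <
        Real.sqrt
          ((∑ i ∈ Finset.Icc 1 (n - 1),
              (x i - (∑ j ∈ Finset.Icc 1 (n - 1), x j) / ((n : ℝ) - 1)) ^ 2) /
            ((n : ℝ) - 2))) := by
  set s := Icc 1 (n - 1)
  have hns : n ∉ s := by simp only [s, mem_Icc]; omega
  have hins : insert n s = Icc 1 n := by ext i; simp only [s, mem_insert, mem_Icc]; omega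
  have hs : 2 ≤ #s := by simp only [s, Nat.card_Icc]; omega
  have hvar : s.sampleVar x
      = (∑ i ∈ s, (x i - (∑ j ∈ s, x j) / ((n : ℝ) - 1)) ^ 2) / ((n : ℝ) - 2) := by
    rw [sampleVar_Icc_one, Nat.cast_pred (by omega), sub_sub, one_add_one_eq_two]
  rw [← mean_Icc_one, ← hins] at hclose
  rw [← sampleVar_Icc_one, ← hvar]
  have hle := sampleVar_insert_le x hns hs hclose
  rw [hins] at hle
  refine ⟨hle, Real.sqrt_le_sqrt hle, fun hne ↦ ?_⟩
  have hlt : ∃ i ∈ s, (x n - (insert n s).mean x) ^ 2 < (x i - (insert n s).mean x) ^ 2 := by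
    by_contra! hge
    have hdist := eq_mean_or_two_values_of_sq_sub_mean_eq x (s := insert n s)
      (forall_mem_insert _ _ _ |>.2 ⟨rfl, fun i hi ↦ le_antisymm (hge i hi) (hclose i hi)⟩)
    rw [hins] at hdist
    refine hne (hdist.imp (fun hconst i hi ↦ ?_) fun ⟨u, v, huv, hu, hv⟩ ↦ ?_)
    · exact (hconst i hi).trans (hconst 1 (mem_Icc.2 ⟨le_rfl, by omega⟩)).symm
    · simp only [Nat.card_Icc, add_tsub_cancel_right] at hu hv
      exact ⟨⟨#{i ∈ Icc 1 n | x i = u}, by omega⟩, u, v, huv, by omega, by omega⟩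
  have hlt' := sampleVar_insert_lt x hns hs hclose hlt
  rw [hins] at hlt'
  exact ⟨hlt', Real.sqrt_lt_sqrt ((Icc 1 n).sampleVar_nonneg x ⟨1, mem_Icc.2 ⟨le_rfl, by omega⟩⟩) hlt'⟩
end

section
/- Let k ≥ 2 and n₁,…,n_k ≥ 1 be integers, let n = n₁ + ⋯ + n_k, and suppose k ≤ n − 1. Then e^{n₁} + ⋯ + e^{n_k} + e^k ≤ e^{n−k+1} + e^k + (k−1)e < eⁿ; moreover the first inequality is strict unless at most one of the exponents nᵢ is ≥ 2. -/
/-!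
Replacing two exponents `a, b ≥ 1` by `a + b - 1` and `1` does not decrease `e^a + e^b`, since
`e^{a+b-1} + e - e^a - e^b = e (e^{a-1} - 1)(e^{b-1} - 1)`, and it strictly increases it when
`a, b > 1`. Merging the exponents one at a time gives the first inequality. For the second, both
`e^{n-k+1}` and `e^k` are at most `e^{n-1}`, and `(n - 2) e < (e - 2) e^{n-1}` because `x e ≤ e^x`
and `(e - 2) e > 1`.
-/

open Real

namespace Real

theorem exp_add_sub_add_exp_sub_exp_add_exp (a b c : ℝ) :
    exp (a + b - c) + exp c - (exp a + exp b) =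
      exp c * ((exp (a - c) - 1) * (exp (b - c) - 1)) := by
  rw [exp_sub, exp_sub, exp_sub, exp_add]
  field_simp
  ring

theorem exp_add_exp_le_exp_add_sub_add_exp {a b c : ℝ} (ha : c ≤ a) (hb : c ≤ b) :
    exp a + exp b ≤ exp (a + b - c) + exp c := by
  rw [← sub_nonneg, exp_add_sub_add_exp_sub_exp_add_exp]
  exact mul_nonneg (exp_pos c).le <| mul_nonneg (sub_nonneg.2 <| one_le_exp <| sub_nonneg.2 ha)
    (sub_nonneg.2 <| one_le_exp <| sub_nonneg.2 hb)

theorem exp_add_exp_lt_exp_add_sub_add_exp {a b c : ℝ} (ha : c < a) (hb : c < b) :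
    exp a + exp b < exp (a + b - c) + exp c := by
  rw [← sub_pos, exp_add_sub_add_exp_sub_exp_add_exp]
  exact mul_pos (exp_pos c) <| mul_pos (sub_pos.2 <| one_lt_exp_iff.2 <| sub_pos.2 ha)
    (sub_pos.2 <| one_lt_exp_iff.2 <| sub_pos.2 hb)

theorem mul_exp_one_le_exp (x : ℝ) : x * exp 1 ≤ exp x :=
  calc x * exp 1 ≤ exp (x - 1) * exp 1 := by
        gcongr
        linarith [add_one_le_exp (x - 1)]
    _ = exp x := by rw [← exp_add, sub_add_cancel]

theorem exp_sub_add_one_add_exp_add_lt_exp {n k : ℝ} (hk : 2 ≤ k) (hkn : k + 1 ≤ n) :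
    exp (n - k + 1) + exp k + (k - 1) * exp 1 < exp n := by
  have h₁ : exp (n - k + 1) ≤ exp (n - 1) := exp_le_exp.2 (by linarith)
  have h₂ : exp k ≤ exp (n - 1) := exp_le_exp.2 (by linarith)
  have h₃ : (k - 1) * exp 1 ≤ (n - 2) * exp 1 :=
    mul_le_mul_of_nonneg_right (by linarith) (exp_pos 1).le
  -- equivalent to `e > 1 + √2`
  have he : 1 < (exp 1 - 2) * exp 1 := by nlinarith [exp_one_gt_d9]
  have h₄ : (n - 2) * exp 1 < (exp 1 - 2) * exp (n - 1) :=
    calc (n - 2) * exp 1 < (n - 2) * exp 1 * ((exp 1 - 2) * exp 1) :=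
          lt_mul_of_one_lt_right (by nlinarith [exp_pos 1]) he
      _ ≤ (exp 1 - 2) * exp (n - 1) := by
          rw [show n - 1 = n - 2 + 1 by ring, exp_add]
          nlinarith [mul_exp_one_le_exp (n - 2), exp_pos 1]
  have h₅ : exp n = exp (n - 1) * exp 1 := by rw [← exp_add, sub_add_cancel]
  linarith

end Real

namespace List

section OrderedSemiring

variable {R : Type*} [Semiring R] [PartialOrder R] [IsOrderedCancelAddMonoid R]

theorem length_le_sum_of_one_le' {l : List R} (h : ∀ x ∈ l, 1 ≤ x) : (l.length : R) ≤ l.sum := by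
  simpa using card_nsmul_le_sum l 1 h

theorem length_lt_sum_of_one_le_of_exists_one_lt {l : List R} (h : ∀ x ∈ l, 1 ≤ x)
    (hlt : ∃ x ∈ l, 1 < x) : (l.length : R) < l.sum := by
  simpa using sum_lt_sum (fun _ => (1 : R)) id h hlt

end OrderedSemiring

theorem sum_map_exp_le_of_one_le {l : List ℝ} (h : ∀ x ∈ l, 1 ≤ x) :
    (l.map exp).sum ≤ exp (l.sum - l.length + 1) + (l.length - 1) * exp 1 := by
  induction l with
  | nil => simp
  | cons a t ih =>
    rw [forall_mem_cons] at h
    have hb : 1 ≤ t.sum - t.length + 1 := by linarith [length_le_sum_of_one_le' h.2]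
    simp only [map_cons, sum_cons, length_cons]
    push_cast
    rw [show a + t.sum - (t.length + 1 : ℝ) + 1 = a + (t.sum - t.length + 1) - 1 by ring]
    linarith [ih h.2, exp_add_exp_le_exp_add_sub_add_exp h.1 hb]

theorem sum_map_exp_lt_of_one_le {l : List ℝ} (h : ∀ x ∈ l, 1 ≤ x)
    (h₂ : 2 ≤ l.countP (1 < ·)) :
    (l.map exp).sum < exp (l.sum - l.length + 1) + (l.length - 1) * exp 1 := by
  induction l with
  | nil => simp at h₂
  | cons a t ih =>
    rw [forall_mem_cons] at h
    have hb : 1 ≤ t.sum - t.length + 1 := by linarith [length_le_sum_of_one_le' h.2]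
    simp only [map_cons, sum_cons, length_cons]
    push_cast
    rw [show a + t.sum - (t.length + 1 : ℝ) + 1 = a + (t.sum - t.length + 1) - 1 by ring]
    by_cases ht : 2 ≤ t.countP (1 < ·)
    · linarith [ih h.2 ht, exp_add_exp_le_exp_add_sub_add_exp h.1 hb]
    · rw [countP_cons] at h₂
      have ha : 1 < a := by
        by_contra ha
        simp [ha] at h₂
        omega
      have ht₁ : ∃ x ∈ t, 1 < x := by
        simp only [ha, decide_true, ↓reduceIte] at h₂
        simpa using countP_pos_iff.1 (show 0 < t.countP (1 < ·) by omega)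
      have hb' : 1 < t.sum - t.length + 1 := by
        linarith [length_lt_sum_of_one_le_of_exists_one_lt h.2 ht₁]
      linarith [sum_map_exp_le_of_one_le h.2, exp_add_exp_lt_exp_add_sub_add_exp ha hb']

end List

/-- For positive integers `n₁,…,n_k` with `k ≥ 2` and `k ≤ n - 1` where `n = Σ nᵢ`:
`e^{n₁} + ⋯ + e^{n_k} + e^k ≤ e^{n-k+1} + e^k + (k-1)e < eⁿ`, and the first inequality
is strict unless at most one of the exponents `nᵢ` is `≥ 2`. -/
theorem sum_exp_le_and_lt (ns : List ℕ) (hk : 2 ≤ ns.length)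
    (hpos : ∀ i ∈ ns, 1 ≤ i) (hkn : ns.length + 1 ≤ ns.sum) :
    (ns.map (fun i => Real.exp i)).sum + Real.exp ns.length ≤
      Real.exp ((ns.sum : ℝ) - ns.length + 1) + Real.exp ns.length +
        ((ns.length : ℝ) - 1) * Real.exp 1 ∧
    Real.exp ((ns.sum : ℝ) - ns.length + 1) + Real.exp ns.length +
        ((ns.length : ℝ) - 1) * Real.exp 1 < Real.exp ns.sum ∧
    (2 ≤ ns.countP (fun i => decide (2 ≤ i)) →
      (ns.map (fun i => Real.exp i)).sum + Real.exp ns.length <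
        Real.exp ((ns.sum : ℝ) - ns.length + 1) + Real.exp ns.length +
          ((ns.length : ℝ) - 1) * Real.exp 1) := by
  -- `ns.map (fun i => Real.exp i)` elaborates as a map over `ns` coerced to `List ℝ` through the
  -- list monad; normalise that coercion to `ns.map Nat.cast`.
  simp only [List.pure_def, List.bind_eq_flatMap, ← List.map_eq_flatMap]
  set xs : List ℝ := ns.map Nat.cast
  have hsum : xs.sum = ns.sum := by simp [xs, Nat.cast_list_sum]
  have hlen : xs.length = ns.length := List.length_map _
  have hxs : ∀ x ∈ xs, 1 ≤ x := by simpa [xs] using hpos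
  have hcount : ns.countP (fun i => decide (2 ≤ i)) = xs.countP (1 < ·) := by
    simp [xs, List.countP_map, Function.comp_def, Nat.one_lt_cast, Nat.succ_le_iff]
  rw [← hsum, ← hlen, hcount]
  refine ⟨by linarith [xs.sum_map_exp_le_of_one_le hxs], ?_,
    fun h₂ => by linarith [xs.sum_map_exp_lt_of_one_le hxs h₂]⟩
  exact exp_sub_add_one_add_exp_add_lt_exp (by rw [hlen]; exact_mod_cast hk)
    (by rw [hsum, hlen]; exact_mod_cast hkn)
end

section
/- Let f(n) = eⁿ. For every n ≥ 2 and every tree T with n leaves, δ_{eⁿ}(T) ≤ eⁿ + n, with equality if and only if T is isomorphic to the star FS_n. Hence the largest eⁿ-size of a tree in 𝒯*_n is eⁿ + n, and it is reached exactly at the star. -/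
/-- Rooted trees encoded as a root together with the list of subtrees
rooted at its children. -/
inductive MTree : Type
  | node : List MTree → MTree

namespace MTree

/-- Number of leaves of a tree (a single node counts as one leaf). -/
def leafCount : MTree → ℕ
  | node ts => max 1 (ts.attach.map (fun x => leafCount x.1)).sum
decreasing_by
  have := List.sizeOf_lt_of_mem x.2
  simp only [node.sizeOf_spec]; omega

/-- `deltaF f T = Σ_{v ∈ V(T)} f (deg v)`, the `f`-size of `T`. -/
noncomputable def deltaF (f : ℕ → ℝ) : MTree → ℝ
  | node ts => f ts.length + (ts.attach.map (fun x => deltaF f x.1)).sum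
decreasing_by
  have := List.sizeOf_lt_of_mem x.2
  simp only [node.sizeOf_spec]; omega

/-- The Colless-like index relative to a "dissimilarity" `D` and a function `f`:
the sum, over all internal nodes `v`, of `D` applied to the list of `f`-sizes of
the subtrees rooted at the children of `v`. -/
noncomputable def cIndex (D : List ℝ → ℝ) (f : ℕ → ℝ) : MTree → ℝ
  | node ts => (if ts.isEmpty then 0 else D (ts.map (deltaF f)))
      + (ts.attach.map (fun x => cIndex D f x.1)).sum
decreasing_by
  have := List.sizeOf_lt_of_mem x.2
  simp only [node.sizeOf_spec]; omega

/-- The Colless index of a (bifurcating) tree: the sum over the internal nodes of the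
absolute value of the difference of the numbers of leaves of the two child subtrees. -/
def colless : MTree → ℕ
  | node ts =>
      (match ts with
       | [a, b] => ((a.leafCount : ℤ) - (b.leafCount : ℤ)).natAbs
       | _ => 0)
      + (ts.attach.map (fun x => colless x.1)).sum
decreasing_by
  have := List.sizeOf_lt_of_mem x.2
  simp only [node.sizeOf_spec]; omega

/-- The quadratic Colless index of a (bifurcating) tree. -/
def collessSq : MTree → ℕ
  | node ts =>
      (match ts with
       | [a, b] => ((a.leafCount : ℤ) - (b.leafCount : ℤ)).natAbs ^ 2
       | _ => 0)
      + (ts.attach.map (fun x => collessSq x.1)).sum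
decreasing_by
  have := List.sizeOf_lt_of_mem x.2
  simp only [node.sizeOf_spec]; omega

/-- A tree in the sense of the paper: no node of out-degree 1. -/
inductive WellFormed : MTree → Prop
  | node {ts : List MTree} : ts.length ≠ 1 → (∀ t ∈ ts, WellFormed t) →
      WellFormed (node ts)

/-- A bifurcating tree: every internal node has out-degree exactly 2. -/
inductive Bifurcating : MTree → Prop
  | node {ts : List MTree} : (ts.length = 0 ∨ ts.length = 2) →
      (∀ t ∈ ts, Bifurcating t) → Bifurcating (node ts)

/-- Isomorphism of (list-encoded) trees: the lists of child subtrees match up to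
a permutation and recursively isomorphic subtrees. -/
inductive Iso : MTree → MTree → Prop
  | node {ts us vs : List MTree} :
      List.Forall₂ Iso ts vs → vs.Perm us → Iso (node ts) (node us)

/-- A tree is fully symmetric when, for every internal node, the subtrees rooted at
its children are pairwise isomorphic. -/
inductive FullySymmetric : MTree → Prop
  | node {ts : List MTree} : (∀ s ∈ ts, ∀ t ∈ ts, Iso s t) →
      (∀ t ∈ ts, FullySymmetric t) → FullySymmetric (node ts)

/-- The comb `K_n` with `n ≥ 1` leaves. -/
def comb : ℕ → MTree
  | 0 => node []
  | 1 => node []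
  | n + 2 => node [node [], comb (n + 1)]

/-- The star `FS_n`, whose root has `n` children, all of them leaves. -/
def star (n : ℕ) : MTree := node (List.replicate n (node []))

/-- The median of a list of real numbers. -/
noncomputable def median (l : List ℝ) : ℝ :=
  let s := l.mergeSort (fun a b => a ≤ b)
  if l.length % 2 = 1 then s.getD (l.length / 2) 0
  else (s.getD (l.length / 2 - 1) 0 + s.getD (l.length / 2) 0) / 2

/-- The mean deviation from the median of a list of real numbers. -/
noncomputable def MDM (l : List ℝ) : ℝ :=
  (l.map (fun x => |x - median l|)).sum / l.length

/-- The sample variance of a list of real numbers. -/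
noncomputable def svar (l : List ℝ) : ℝ :=
  (l.map (fun x => (x - l.sum / l.length) ^ 2)).sum / ((l.length : ℝ) - 1)

/-- The sample standard deviation of a list of real numbers. -/
noncomputable def ssd (l : List ℝ) : ℝ := Real.sqrt (svar l)

end MTree

/-! The `eⁿ`-size of a tree with `ℓ` leaves is `ℓ + ∑ e^{deg v}` over its internal nodes, so it
suffices to bound that sum by `e^ℓ`. At a root with `k ≥ 2` children having `ℓ₁, …, ℓₖ` leaves,
induction bounds the contribution of each internal child by `e^{ℓᵢ}`, and absorbing these one
at a time with `eᵃ + eᵇ < e^{a+b-1}` (for `a, b ≥ 2`) gives `e^k + ∑ e^{ℓᵢ} ≤ e^{k + ∑ (ℓᵢ - 1)} = e^ℓ`,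
strictly unless every child is a leaf, that is, unless the tree is the star. -/

namespace MTree

@[simp]
theorem leafCount_node (ts : List MTree) :
    (node ts).leafCount = max 1 (ts.map leafCount).sum := by
  rw [leafCount, List.map_attach_eq_pmap, List.pmap_eq_map]

@[simp]
theorem deltaF_node (f : ℕ → ℝ) (ts : List MTree) :
    deltaF f (node ts) = f ts.length + (ts.map (deltaF f)).sum := by
  rw [deltaF, List.map_attach_eq_pmap, List.pmap_eq_map]

theorem one_le_leafCount (t : MTree) : 1 ≤ t.leafCount := by
  cases t; simp

theorem leafCount_node_of_ne_nil {ts : List MTree} (h : ts ≠ []) :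
    (node ts).leafCount = (ts.map leafCount).sum := by
  obtain ⟨t, ts, rfl⟩ := List.exists_cons_of_ne_nil h
  have := one_le_leafCount t
  simp only [leafCount_node, List.map_cons, List.sum_cons]
  omega

theorem length_le_leafCount_node (ts : List MTree) : ts.length ≤ (node ts).leafCount := by
  rw [leafCount_node, ← List.length_map (f := leafCount)]
  exact (List.length_le_sum_of_one_le _ (by simp [one_le_leafCount])).trans (le_max_right _ _)

theorem WellFormed.two_le_length {ts : List MTree} (h : WellFormed (MTree.node ts))
    (hts : ts ≠ []) : 2 ≤ ts.length := by
  obtain ⟨hlen, -⟩ : ts.length ≠ 1 ∧ _ := by cases h; tauto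
  have := List.length_pos_iff.2 hts
  omega

theorem WellFormed.two_le_leafCount {ts : List MTree} (h : WellFormed (MTree.node ts))
    (hts : ts ≠ []) : 2 ≤ (MTree.node ts).leafCount :=
  (h.two_le_length hts).trans (length_le_leafCount_node ts)

@[simp]
theorem deltaF_star (f : ℕ → ℝ) (k : ℕ) : deltaF f (star k) = f k + k * f 0 := by
  simp [star]

@[simp]
theorem leafCount_star (k : ℕ) : (star k).leafCount = max 1 k := by
  simp [star]

theorem Iso.refl : ∀ t : MTree, Iso t t
  | MTree.node ts => Iso.node (List.forall₂_same.2 fun t _ => Iso.refl t) (List.Perm.refl ts)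

theorem eq_leaf_of_iso_leaf {t : MTree} (h : Iso t (node [])) : t = node [] := by
  obtain ⟨hts, hvs⟩ := h
  rw [hvs.eq_nil, List.forall₂_nil_right_iff] at hts
  rw [hts]

theorem eq_replicate_leaf_of_forall₂_iso : ∀ {ts : List MTree} {n : ℕ},
    List.Forall₂ Iso ts (List.replicate n (node [])) → ts = List.replicate n (node [])
  | [], 0, _ => rfl
  | t :: _, n + 1, .cons ht hts => by
    rw [eq_leaf_of_iso_leaf ht, eq_replicate_leaf_of_forall₂_iso hts, List.replicate_succ]

theorem iso_star_iff {t : MTree} {n : ℕ} : Iso t (star n) ↔ t = star n := by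
  refine ⟨fun h => ?_, fun h => h ▸ Iso.refl _⟩
  obtain ⟨hts, hvs⟩ := h
  exact congrArg node (eq_replicate_leaf_of_forall₂_iso (List.perm_replicate.1 hvs ▸ hts))

open Real

/-- Bound for `∑ e^{deg v}` over the internal nodes `v` of a tree with `m` leaves
(a single leaf has none). -/
noncomputable def internalExpBound (m : ℕ) : ℝ := if m = 1 then 0 else exp m

theorem exp_add_exp_lt_exp {a b : ℝ} (ha : 2 ≤ a) (hb : 2 ≤ b) :
    exp a + exp b < exp (a + b - 1) := by
  have hea : exp a ≤ exp (a + b - 2) := exp_le_exp.2 (by linarith)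
  have heb : exp b ≤ exp (a + b - 2) := exp_le_exp.2 (by linarith)
  have hsplit : exp (a + b - 1) = exp 1 * exp (a + b - 2) := by rw [← exp_add]; ring_nf
  have he : 2 < exp 1 := lt_trans (by norm_num) exp_one_gt_d9
  nlinarith [exp_pos (a + b - 2)]

theorem exp_add_internalExpBound_lt {a : ℝ} (ha : 2 ≤ a) {m : ℕ} (hm : 2 ≤ m) :
    exp a + internalExpBound m < exp (a + m - 1) := by
  rw [internalExpBound, if_neg (by omega)]
  exact exp_add_exp_lt_exp ha (by exact_mod_cast hm)

theorem exp_add_internalExpBound_le {a : ℝ} (ha : 2 ≤ a) {m : ℕ} (hm : 1 ≤ m) :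
    exp a + internalExpBound m ≤ exp (a + m - 1) := by
  rcases hm.eq_or_lt with rfl | hm
  · simp [internalExpBound]
  · exact (exp_add_internalExpBound_lt ha hm).le

theorem exp_add_sum_internalExpBound_le {a : ℝ} (ha : 2 ≤ a) {ms : List ℕ}
    (hms : ∀ m ∈ ms, 1 ≤ m) :
    exp a + (ms.map internalExpBound).sum ≤ exp (a + ms.sum - ms.length) := by
  induction ms generalizing a with
  | nil => simp
  | cons m ms ih =>
    simp only [List.forall_mem_cons] at hms
    have hm : (1 : ℝ) ≤ m := by exact_mod_cast hms.1
    have ha' : 2 ≤ a + m - 1 := by linarith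
    calc exp a + ((m :: ms).map internalExpBound).sum
        = (exp a + internalExpBound m) + (ms.map internalExpBound).sum := by simp; ring
      _ ≤ exp (a + m - 1) + (ms.map internalExpBound).sum := by
        gcongr; exact exp_add_internalExpBound_le ha hms.1
      _ ≤ exp (a + m - 1 + ms.sum - ms.length) := ih ha' hms.2
      _ = exp (a + (m :: ms).sum - (m :: ms).length) := by
        congr 1; simp only [List.sum_cons, List.length_cons]; push_cast; ring

theorem exp_add_sum_internalExpBound_lt {a : ℝ} (ha : 2 ≤ a) {ms : List ℕ}
    (hms : ∀ m ∈ ms, 1 ≤ m) (hlt : ∃ m ∈ ms, 2 ≤ m) :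
    exp a + (ms.map internalExpBound).sum < exp (a + ms.sum - ms.length) := by
  induction ms generalizing a with
  | nil => simp at hlt
  | cons m ms ih =>
    simp only [List.forall_mem_cons] at hms
    simp only [List.mem_cons, exists_eq_or_imp] at hlt
    have hm : (1 : ℝ) ≤ m := by exact_mod_cast hms.1
    have ha' : 2 ≤ a + m - 1 := by linarith
    have hexp : exp (a + (m :: ms).sum - (m :: ms).length)
        = exp (a + m - 1 + ms.sum - ms.length) := by
      congr 1; simp only [List.sum_cons, List.length_cons]; push_cast; ring
    rw [hexp, List.map_cons, List.sum_cons, ← add_assoc]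
    rcases hlt with hm2 | hrest
    · calc exp a + internalExpBound m + (ms.map internalExpBound).sum
          < exp (a + m - 1) + (ms.map internalExpBound).sum := by
            gcongr; exact exp_add_internalExpBound_lt ha hm2
        _ ≤ _ := exp_add_sum_internalExpBound_le ha' hms.2
    · calc exp a + internalExpBound m + (ms.map internalExpBound).sum
          ≤ exp (a + m - 1) + (ms.map internalExpBound).sum := by
            gcongr; exact exp_add_internalExpBound_le ha hms.1
        _ < _ := ih ha' hms.2 hrest

local notation "δₑ" => deltaF (fun m : ℕ => Real.exp m)

theorem deltaF_exp_node_le {ts : List MTree} (hts : ts ≠ [])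
    (h : ∀ t ∈ ts, δₑ t ≤ t.leafCount + internalExpBound t.leafCount) :
    δₑ (node ts) ≤ (node ts).leafCount
      + (exp ts.length + ((ts.map leafCount).map internalExpBound).sum) := by
  have hsum : (ts.map δₑ).sum ≤ (ts.map fun t => (t.leafCount : ℝ)
      + internalExpBound t.leafCount).sum := List.sum_le_sum h
  rw [List.sum_map_add] at hsum
  simp only [deltaF_node, leafCount_node_of_ne_nil hts, Nat.cast_list_sum, List.map_map, Function.comp_def]
  linarith

theorem WellFormed.deltaF_exp_le {t : MTree} (h : WellFormed t) :
    δₑ t ≤ t.leafCount + internalExpBound t.leafCount := by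
  induction h with
  | @node ts hlen hwf ih =>
    rcases eq_or_ne ts [] with rfl | hts
    · simp [internalExpBound]
    have hT : WellFormed (MTree.node ts) := .node hlen hwf
    have hk : (2 : ℝ) ≤ ts.length := by exact_mod_cast hT.two_le_length hts
    have hexp := exp_add_sum_internalExpBound_le hk (ms := ts.map leafCount)
      (by simp [one_le_leafCount])
    rw [List.length_map, add_sub_cancel_left, ← leafCount_node_of_ne_nil hts] at hexp
    have hδ := deltaF_exp_node_le hts ih
    rw [internalExpBound, if_neg (by have := hT.two_le_leafCount hts; omega)]
    linarith

theorem WellFormed.deltaF_exp_lt {ts : List MTree} (h : WellFormed (MTree.node ts))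
    (hts : ∃ t ∈ ts, t ≠ MTree.node []) :
    δₑ (MTree.node ts) < (MTree.node ts).leafCount + exp (MTree.node ts).leafCount := by
  obtain ⟨-, hwf⟩ : ts.length ≠ 1 ∧ ∀ t ∈ ts, WellFormed t := by cases h; tauto
  have hne : ts ≠ [] := by rintro rfl; simp at hts
  have hk : (2 : ℝ) ≤ ts.length := by exact_mod_cast h.two_le_length hne
  have hinternal : ∃ m ∈ ts.map leafCount, 2 ≤ m := by
    obtain ⟨⟨us⟩, ht, hus⟩ := hts
    exact ⟨_, List.mem_map_of_mem ht, (hwf _ ht).two_le_leafCount (by simpa using hus)⟩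
  have hexp := exp_add_sum_internalExpBound_lt hk (by simp [one_le_leafCount]) hinternal
  rw [List.length_map, add_sub_cancel_left, ← leafCount_node_of_ne_nil hne] at hexp
  have hδ := deltaF_exp_node_le hne fun t ht => (hwf t ht).deltaF_exp_le
  linarith

end MTree

/-- The maximum `eⁿ`-size of a tree with `n ≥ 2` leaves is `eⁿ + n`, attained exactly
at the star `FS_n`. -/
theorem deltaF_exp_le_star (n : ℕ) (hn : 2 ≤ n) (T : MTree)
    (hT : T.WellFormed) (hTn : T.leafCount = n) :
    MTree.deltaF (fun m => Real.exp m) T ≤ Real.exp n + n ∧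
    (MTree.deltaF (fun m => Real.exp m) T = Real.exp n + n ↔ T.Iso (MTree.star n)) := by
  obtain ⟨ts⟩ := T
  rw [MTree.iso_star_iff]
  by_cases hleaves : ∀ t ∈ ts, t = .node []
  · have hstar : MTree.node ts = MTree.star ts.length :=
      congrArg _ (List.eq_replicate_iff.2 ⟨rfl, hleaves⟩)
    have hlen : ts.length = n := by
      rw [hstar, MTree.leafCount_star] at hTn
      omega
    rw [hstar, hlen, MTree.deltaF_star]
    simp
  · push Not at hleaves
    have hlt := hT.deltaF_exp_lt hleaves
    rw [hTn] at hlt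
    refine ⟨by linarith, iff_of_false (by linarith) fun hstar => ?_⟩
    obtain ⟨t, ht, hne⟩ := hleaves
    exact hne (List.eq_of_mem_replicate (MTree.node.inj hstar ▸ ht))
end
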